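/- arXiv:0904.1856 — 2 statements merged into one kernel-verified Lean document; each statement's English description precedes it below -/
import Mathlib

section
/- Let a = (a₁,…,a_m), m ≥ 1, be nonzero integers such that r := [a₁,…,a_m] lies in ℚ (is not ∞). Then a rational number r̃ belongs to the Γ̂_r-orbit of r or of ∞ in ℙ¹(ℚ) if and only if there exist a positive integer n, c ∈ ℤ, (ε₁,…,εₙ) ∈ {±1}ⁿ and (c₁,…,c_{n−1}) ∈ ℤ^{n−1} such that r̃ = 2c + [ε₁a, 2c₁, ε₂a⁻¹, 2c₂, ε₃a, …, 2c_{n−1}, εₙa^{(−1)^{n−1}}], i.e., r̃ is the image under F(2c) of the continued fraction value of the list obtained by concatenating the blocks ε_j a for j odd, resp. ε_j a⁻¹ for j even, separated by the single entries 2c_j. [Proposition 5.1] -/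
open Matrix

/-- The group `GL(2,ℤ)`. -/
abbrev GL2Z := Matrix.GeneralLinearGroup (Fin 2) ℤ

/-- The projective line `ℙ¹(ℚ)`. -/
abbrev P1Q := Projectivization ℚ (Fin 2 → ℚ)

/-- The point `∞ = [1 : 0]` of `ℙ¹(ℚ)`. -/
noncomputable def infty : P1Q :=
  Projectivization.mk ℚ ![1, 0] (by
    intro h; simpa using congrFun h 0)

/-- The point `[x : 1]` of `ℙ¹(ℚ)` corresponding to the rational number `x`. -/
noncomputable def ratPt (x : ℚ) : P1Q :=
  Projectivization.mk ℚ ![x, 1] (by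
    intro h; simpa using congrFun h 1)

/-- A matrix in `GL(2,ℤ)` viewed as an invertible matrix over `ℚ`. -/
def glq (M : GL2Z) : Matrix.GeneralLinearGroup (Fin 2) ℚ :=
  Matrix.GeneralLinearGroup.map (Int.castRingHom ℚ) M

lemma glq_inj (M : GL2Z) :
    Function.Injective ((glq M).val.mulVecLin) := by
  have h : ((glq M)⁻¹).val.mulVecLin ∘ₗ (glq M).val.mulVecLin = LinearMap.id := by
    rw [← Matrix.mulVecLin_mul]
    have : ((glq M)⁻¹).val * (glq M).val = 1 := by
      rw [← Units.val_mul, inv_mul_cancel, Units.val_one]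
    rw [this, Matrix.mulVecLin_one]
  intro x y hxy
  have := congrArg ((glq M)⁻¹).val.mulVecLin hxy
  calc x = (((glq M)⁻¹).val.mulVecLin ∘ₗ (glq M).val.mulVecLin) x := by rw [h]; rfl
    _ = (((glq M)⁻¹).val.mulVecLin ∘ₗ (glq M).val.mulVecLin) y := by
        simpa using this
    _ = y := by rw [h]; rfl

/-- The action of `GL(2,ℤ)` on `ℙ¹(ℚ)` by linear fractional transformations:
`(a b; c d)` sends `[x : y]` to `[ax + by : cx + dy]`. -/
noncomputable def act (M : GL2Z) (x : P1Q) : P1Q :=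
  Projectivization.map ((glq M).val.mulVecLin) (glq_inj M) x

/-- The matrix `A₁ = (-1 0; 0 1)`, acting by `x ↦ -x`. -/
def A1 : GL2Z :=
  ⟨!![-1, 0; 0, 1], !![-1, 0; 0, 1], by decide, by decide⟩

/-- The matrix `A₂ = (-1 2; 0 1)`, acting by `x ↦ 2 - x`. -/
def A2 : GL2Z :=
  ⟨!![-1, 2; 0, 1], !![-1, 2; 0, 1], by decide, by decide⟩

/-- The group `Γ_∞`, generated by the reflections `A₁` and `A₂`. -/
def GammaInf : Subgroup GL2Z := Subgroup.closure {A1, A2}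

/-- The group `Γ_r = B Γ_∞ B⁻¹`, for `B ∈ GL(2,ℤ)` with `B·∞ = r`. -/
def Gamma (B : GL2Z) : Subgroup GL2Z :=
  GammaInf.map (MulAut.conj B).toMonoidHom

/-- The group `Γ̂_r`, generated by `Γ_r ∪ Γ_∞`. -/
def GammaHat (B : GL2Z) : Subgroup GL2Z := Gamma B ⊔ GammaInf
/-- The matrix `E(t) = (1 0; t 1)`. -/
def Emat (t : ℤ) : GL2Z :=
  ⟨!![1, 0; t, 1], !![1, 0; -t, 1],
    by simp [Matrix.mul_fin_two, Matrix.one_fin_two],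
    by simp [Matrix.mul_fin_two, Matrix.one_fin_two]⟩

/-- The matrix `F(t) = (1 t; 0 1)`. -/
def Fmat (t : ℤ) : GL2Z :=
  ⟨!![1, t; 0, 1], !![1, -t; 0, 1],
    by simp [Matrix.mul_fin_two, Matrix.one_fin_two],
    by simp [Matrix.mul_fin_two, Matrix.one_fin_two]⟩

/-- The alternating product `E(a₁) F(a₂) E(a₃) ⋯`;
the boolean records whether the next factor is an `E`. -/
def cfMatAux : Bool → List ℤ → GL2Z
  | _, [] => 1
  | true, t :: l => Emat t * cfMatAux false l
  | false, t :: l => Fmat t * cfMatAux true l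

/-- The matrix `E(a₁) F(a₂) E(a₃) ⋯` associated to a continued fraction. -/
def cfMat (l : List ℤ) : GL2Z := cfMatAux true l

/-- The continued fraction value `[a₁, …, a_m] ∈ ℙ¹(ℚ)`: the image of `∞`
(if `m` is odd) resp. of `0` (if `m` is even) under `E(a₁) F(a₂) E(a₃) ⋯`. -/
noncomputable def cfVal (l : List ℤ) : P1Q :=
  act (cfMat l) (if Odd l.length then infty else ratPt 0)
/-- `r̃` belongs to the `Γ̂_r`-orbit of `r` or of `∞` (for `r ∈ ℚ`):
for some (equivalently, any) `B ∈ GL(2,ℤ)` with `B·∞ = r`, some element of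
`Γ̂_r` maps `r` or `∞` to `r̃`. -/
def inOrbit (r : ℚ) (x : P1Q) : Prop :=
  ∃ B : GL2Z, act B infty = ratPt r ∧
    ∃ M ∈ GammaHat B, act M (ratPt r) = x ∨ act M infty = x

/-- The `j`-th block (`j` is `0`-based here, `j+1` in the paper): `ε•a` for `j`
even (paper-odd), and `ε•a⁻¹` (the reversed sequence) for `j` odd (paper-even). -/
def towerBlock (a : List ℤ) (ε : ℤ) (j : ℕ) : List ℤ :=
  (if j % 2 = 0 then a else a.reverse).map fun x => ε * x

/-- The list `(ε₁a, 2c₁, ε₂a⁻¹, 2c₂, ε₃a, …, 2c_{n−1}, εₙa^{(−1)^{n−1}})`: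
the concatenation of the blocks `ε_j a` (`j` odd) resp. `ε_j a⁻¹` (`j` even),
separated by the single entries `2c_j`. -/
def towerList (a : List ℤ) (n : ℕ) (ε : ℕ → ℤ) (c : ℕ → ℤ) : List ℤ :=
  ((List.range n).map fun j =>
    towerBlock a (ε j) j ++ if j + 1 < n then [2 * c j] else []).flatten

/-! Put `J = (0 1; 1 0)` (`Jmat`) and `Φ(l) = J F(l₁) J F(l₂) ⋯ J F(l_m)` (`cfProd l`).
Then `[l] = Φ(l)·0` for lists of either parity, `Φ` turns concatenation into products, and
`(Φ(a) J)⁻¹ = Φ(-a⁻¹) J`. Take `B₀ = Φ(a) J`, so that `B₀·∞ = r`. The group `Γ_∞` consists of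
the maps `F(2k)` and `F(2k) A₁` (`x ↦ x + 2k` and `x ↦ 2k - x`), and
  `B₀ F(2k) B₀⁻¹ = Φ(a, 2k, -a⁻¹) J`,   `B₀ F(2k) A₁ B₀⁻¹ = ±Φ(a, 2k, a⁻¹) J A₁`.
So conjugating by `B₀` puts one pair of blocks `a, 2k, ±a⁻¹` in front of a continued fraction.
It follows that `Γ̂_r` maps the set `{∞} ∪ {F(2c)·[tower]}` into itself, and this set contains
`r` and `∞`. Conversely, every tower value is obtained from `r` or `∞` by adding pairs of blocks
one at a time. Replacing `B₀` by another `B` with `B·∞ = r` does not change `Γ_r`, because the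
stabiliser of `∞` normalises `Γ_∞`. -/

open scoped Pointwise

lemma le_stabilizer_of_forall_smul_mem {G α : Type*} [Group G] [MulAction G α] {H : Subgroup G}
    {s : Set α} (h : ∀ g ∈ H, ∀ x ∈ s, g • x ∈ s) : H ≤ MulAction.stabilizer G s := by
  refine fun g hg => MulAction.mem_stabilizer_set.2 fun x => ⟨fun hx => ?_, h g hg x⟩
  simpa using h g⁻¹ (inv_mem hg) _ hx

section Action

lemma act_mk (M : GL2Z) {v : Fin 2 → ℚ} (hv : v ≠ 0) :
    act M (Projectivization.mk ℚ v hv) =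
      Projectivization.mk ℚ ((glq M).val *ᵥ v) (by simpa using (glq_inj M).ne hv) :=
  Projectivization.map_mk _ _ _ _

lemma act_mul (M N : GL2Z) (x : P1Q) : act (M * N) x = act M (act N x) := by
  induction x using Projectivization.ind with
  | h v hv => simp only [act_mk, glq, map_mul, Units.val_mul, Matrix.mulVec_mulVec]

lemma act_one (x : P1Q) : act 1 x = x := by
  induction x using Projectivization.ind with
  | h v hv => simp only [act_mk, glq, map_one, Units.val_one, Matrix.one_mulVec]

lemma act_neg (M : GL2Z) (x : P1Q) : act (-M) x = act M x := by
  induction x using Projectivization.ind with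
  | h v hv =>
    have : (glq (-M)).val = -(glq M).val := by ext i j; simp [glq]
    rw [act_mk, act_mk, Projectivization.mk_eq_mk_iff']
    exact ⟨-1, by rw [this, Matrix.neg_mulVec, neg_one_smul]⟩

noncomputable instance : MulAction GL2Z P1Q where
  smul := act
  one_smul := act_one
  mul_smul := act_mul

lemma act_mk_vec (M : GL2Z) (x y : ℚ) (h : ![x, y] ≠ 0) :
    act M (Projectivization.mk ℚ ![x, y] h) = Projectivization.mk ℚ
      ![M.val 0 0 * x + M.val 0 1 * y, M.val 1 0 * x + M.val 1 1 * y]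
      (by simpa [glq, Matrix.mulVec, dotProduct, Fin.sum_univ_two] using (glq_inj M).ne h) := by
  rw [act_mk]
  congr 1
  ext i; fin_cases i <;> simp [glq, Matrix.mulVec, dotProduct, Fin.sum_univ_two]

end Action

section Generators

def Jmat : GL2Z := ⟨!![0, 1; 1, 0], !![0, 1; 1, 0], by decide, by decide⟩

lemma Jmat_mul_self : Jmat * Jmat = 1 := Units.ext (by decide)

lemma Jmat_mul_Jmat_mul (M : GL2Z) : Jmat * (Jmat * M) = M := by
  rw [← mul_assoc, Jmat_mul_self, one_mul]

lemma A1_mul_self : A1 * A1 = 1 := Units.ext (by decide)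

lemma A1_inv : A1⁻¹ = A1 := inv_eq_of_mul_eq_one_right A1_mul_self

lemma A1_mul_Jmat : A1 * Jmat = -(Jmat * A1) := Units.ext (by decide)

lemma A2_eq : A2 = Fmat 2 * A1 := Units.ext (by decide)

lemma Jmat_mul_Fmat_mul_Jmat (t : ℤ) : Jmat * Fmat t * Jmat = Emat t := by
  ext i j; fin_cases i <;> fin_cases j <;> simp [Jmat, Fmat, Emat, Matrix.mul_apply]

lemma Fmat_add (t u : ℤ) : Fmat (t + u) = Fmat t * Fmat u := by
  ext i j; fin_cases i <;> fin_cases j <;> simp [Fmat, Matrix.mul_apply, add_comm]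

lemma Fmat_zero : Fmat 0 = 1 := by
  ext i j; fin_cases i <;> fin_cases j <;> simp [Fmat]

lemma Fmat_inv (t : ℤ) : (Fmat t)⁻¹ = Fmat (-t) :=
  inv_eq_of_mul_eq_one_right (by rw [← Fmat_add, add_neg_cancel, Fmat_zero])

lemma A1_mul_Fmat (t : ℤ) : A1 * Fmat t = Fmat (-t) * A1 := by
  ext i j; fin_cases i <;> fin_cases j <;> simp [A1, Fmat, Matrix.mul_apply]

lemma ratPt_ne_infty (x : ℚ) : ratPt x ≠ infty := by
  rw [ratPt, infty, Ne, Projectivization.mk_eq_mk_iff']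
  rintro ⟨z, hz⟩
  simpa using congrFun hz 1

lemma act_Jmat_ratPt_zero : act Jmat (ratPt 0) = infty := by
  rw [ratPt, act_mk_vec, infty]; congr 1; simp [Jmat]

lemma act_Jmat_infty : act Jmat infty = ratPt 0 := by
  rw [← act_Jmat_ratPt_zero, ← act_mul, Jmat_mul_self, act_one]

lemma act_A1_ratPt_zero : act A1 (ratPt 0) = ratPt 0 := by
  rw [ratPt, act_mk_vec]; congr 1; simp [A1]

lemma act_A1_infty : act A1 infty = infty := by
  rw [infty, act_mk_vec, Projectivization.mk_eq_mk_iff']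
  exact ⟨-1, by ext i; fin_cases i <;> simp [A1]⟩

lemma act_Fmat_infty (t : ℤ) : act (Fmat t) infty = infty := by
  rw [infty, act_mk_vec]; congr 1; simp [Fmat]

lemma act_A1_act_A1 (x : P1Q) : act A1 (act A1 x) = x := by
  rw [← act_mul, A1_mul_self, act_one]

lemma act_A1_act_Jmat (x : P1Q) : act A1 (act Jmat x) = act Jmat (act A1 x) := by
  rw [← act_mul, A1_mul_Jmat, act_neg, act_mul]

lemma act_A1_act_Fmat (t : ℤ) (x : P1Q) :
    act A1 (act (Fmat t) x) = act (Fmat (-t)) (act A1 x) := by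
  rw [← act_mul, A1_mul_Fmat, act_mul]

end Generators

section ContinuedFractions

def cfProd (l : List ℤ) : GL2Z := (l.map fun t => Jmat * Fmat t).prod

@[simp] lemma cfProd_nil : cfProd [] = 1 := rfl

@[simp] lemma cfProd_cons (t : ℤ) (l : List ℤ) : cfProd (t :: l) = Jmat * Fmat t * cfProd l :=
  List.prod_cons

@[simp] lemma cfProd_append (l₁ l₂ : List ℤ) : cfProd (l₁ ++ l₂) = cfProd l₁ * cfProd l₂ := by
  simp [cfProd]

lemma cfMatAux_mul_Jmat_pow (l : List ℤ) :
    cfMatAux true l * Jmat ^ l.length = cfProd l ∧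
      cfMatAux false l * Jmat ^ l.length = Jmat * cfProd l * Jmat := by
  induction l with
  | nil => simp [cfMatAux, Jmat_mul_self]
  | cons t l ih =>
    simp only [cfMatAux, List.length_cons, pow_succ, cfProd_cons, ← Jmat_mul_Fmat_mul_Jmat]
    constructor
    · calc Jmat * Fmat t * Jmat * cfMatAux false l * (Jmat ^ l.length * Jmat)
          = Jmat * Fmat t * Jmat * (cfMatAux false l * Jmat ^ l.length) * Jmat := by group
        _ = _ := by rw [ih.2]; simp only [mul_assoc, Jmat_mul_Jmat_mul, Jmat_mul_self, mul_one]
    · calc Fmat t * cfMatAux true l * (Jmat ^ l.length * Jmat)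
          = Fmat t * (cfMatAux true l * Jmat ^ l.length) * Jmat := by group
        _ = _ := by rw [ih.1]; simp only [mul_assoc, Jmat_mul_Jmat_mul]

lemma act_Jmat_pow_ratPt_zero (n : ℕ) :
    act (Jmat ^ n) (ratPt 0) = if Odd n then infty else ratPt 0 := by
  induction n with
  | zero => simp [act_one]
  | succ n ih =>
    rw [pow_succ', act_mul, ih]
    by_cases h : Odd n
    · simp [h, Nat.odd_add_one, act_Jmat_infty]
    · simp [h, Nat.odd_add_one, act_Jmat_ratPt_zero]

lemma cfVal_eq_act_cfProd (l : List ℤ) : cfVal l = act (cfProd l) (ratPt 0) := by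
  rw [← (cfMatAux_mul_Jmat_pow l).1, act_mul, act_Jmat_pow_ratPt_zero]; rfl

@[simp] lemma cfVal_nil : cfVal [] = ratPt 0 := by simp [cfVal_eq_act_cfProd, act_one]

lemma cfVal_append (l₁ l₂ : List ℤ) : cfVal (l₁ ++ l₂) = act (cfProd l₁) (cfVal l₂) := by
  simp [cfVal_eq_act_cfProd, act_mul]

lemma cfVal_cons (t : ℤ) (l : List ℤ) :
    cfVal (t :: l) = act Jmat (act (Fmat t) (cfVal l)) := by
  simp [cfVal_eq_act_cfProd, act_mul]

lemma cfProd_mul_Jmat_inv (l : List ℤ) :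
    (cfProd l * Jmat)⁻¹ = cfProd (l.reverse.map Neg.neg) * Jmat := by
  refine inv_eq_of_mul_eq_one_right ?_
  induction l with
  | nil => simp [Jmat_mul_self]
  | cons t l ih =>
    simp only [cfProd_cons, List.reverse_cons, List.map_append, cfProd_append, List.map_cons,
      List.map_nil, cfProd_nil, mul_one]
    calc Jmat * Fmat t * cfProd l * Jmat *
          (cfProd (l.reverse.map Neg.neg) * (Jmat * Fmat (-t)) * Jmat)
        = Jmat * Fmat t * (cfProd l * Jmat * (cfProd (l.reverse.map Neg.neg) * Jmat)) *
            Fmat (-t) * Jmat := by group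
      _ = 1 := by
        rw [ih, mul_one, mul_assoc Jmat, ← Fmat_add, add_neg_cancel, Fmat_zero, mul_one,
          Jmat_mul_self]

lemma act_A1_act_cfProd (l : List ℤ) (x : P1Q) :
    act A1 (act (cfProd l) x) = act (cfProd (l.map Neg.neg)) (act A1 x) := by
  induction l with
  | nil => simp [act_one]
  | cons t l ih =>
    simp only [cfProd_cons, List.map_cons, act_mul, act_A1_act_Jmat, act_A1_act_Fmat, ih]

lemma act_A1_cfVal (l : List ℤ) : act A1 (cfVal l) = cfVal (l.map Neg.neg) := by
  rw [cfVal_eq_act_cfProd, cfVal_eq_act_cfProd, act_A1_act_cfProd, act_A1_ratPt_zero]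

end ContinuedFractions

section GammaInf

lemma A1_mem_GammaInf : A1 ∈ GammaInf := Subgroup.subset_closure (by simp)

lemma Fmat_two_mul_mem_GammaInf (k : ℤ) : Fmat (2 * k) ∈ GammaInf := by
  have h2 : Fmat 2 ∈ GammaInf := by
    rw [← mul_one (Fmat 2), ← A1_mul_self, ← mul_assoc, ← A2_eq]
    exact mul_mem (Subgroup.subset_closure (by simp)) A1_mem_GammaInf
  induction k using Int.induction_on with
  | zero => simp [Fmat_zero, one_mem]
  | succ k ih => rw [mul_add, mul_one, Fmat_add]; exact mul_mem ih h2
  | pred k ih =>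
    rw [mul_sub, mul_one, sub_eq_add_neg, Fmat_add, ← Fmat_inv]; exact mul_mem ih (inv_mem h2)

lemma mem_GammaInf_iff (γ : GL2Z) :
    γ ∈ GammaInf ↔ ∃ k, γ = Fmat (2 * k) ∨ γ = Fmat (2 * k) * A1 := by
  refine ⟨fun h => ?_, ?_⟩
  · induction h using Subgroup.closure_induction with
    | mem x hx =>
      rcases hx with rfl | rfl
      · exact ⟨0, Or.inr (by rw [mul_zero, Fmat_zero, one_mul])⟩
      · exact ⟨1, Or.inr A2_eq⟩
    | one => exact ⟨0, Or.inl (by rw [mul_zero, Fmat_zero])⟩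
    | mul x y _ _ hx hy =>
      obtain ⟨k, rfl | rfl⟩ := hx <;> obtain ⟨l, rfl | rfl⟩ := hy
      · exact ⟨k + l, Or.inl (by rw [mul_add, Fmat_add])⟩
      · exact ⟨k + l, Or.inr (by rw [mul_add, Fmat_add, mul_assoc])⟩
      · refine ⟨k - l, Or.inr ?_⟩
        rw [mul_assoc, A1_mul_Fmat, ← mul_assoc, ← Fmat_add]; ring_nf
      · refine ⟨k - l, Or.inl ?_⟩
        rw [mul_assoc, ← mul_assoc A1, A1_mul_Fmat, mul_assoc, A1_mul_self, mul_one, ← Fmat_add]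
        ring_nf
    | inv x _ hx =>
      obtain ⟨k, rfl | rfl⟩ := hx
      · exact ⟨-k, Or.inl (by rw [Fmat_inv, mul_neg])⟩
      · exact ⟨k, Or.inr (by rw [_root_.mul_inv_rev, A1_inv, Fmat_inv, A1_mul_Fmat, neg_neg])⟩
  · rintro ⟨k, rfl | rfl⟩
    · exact Fmat_two_mul_mem_GammaInf k
    · exact mul_mem (Fmat_two_mul_mem_GammaInf k) A1_mem_GammaInf

lemma Fmat_conj_mem_GammaInf (m : ℤ) {γ : GL2Z} (hγ : γ ∈ GammaInf) :
    Fmat m * γ * (Fmat m)⁻¹ ∈ GammaInf := by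
  obtain ⟨k, rfl | rfl⟩ := (mem_GammaInf_iff γ).1 hγ
  · rwa [← Fmat_add, Fmat_inv, ← Fmat_add, add_neg_cancel_comm]
  · have : Fmat m * (Fmat (2 * k) * A1) * (Fmat m)⁻¹ = Fmat (2 * (k + m)) * A1 := by
      rw [Fmat_inv, mul_assoc, mul_assoc, A1_mul_Fmat, neg_neg, ← mul_assoc, ← mul_assoc,
        ← Fmat_add, ← Fmat_add]
      congr 2; ring
    rw [this]
    exact mul_mem (Fmat_two_mul_mem_GammaInf _) A1_mem_GammaInf

lemma exists_eq_Fmat_of_act_infty_eq_infty {U : GL2Z} (hU : act U infty = infty) :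
    ∃ m, U = Fmat m ∨ U = Fmat m * A1 ∨ U = -Fmat m ∨ U = -(Fmat m * A1) := by
  have h10 : U.val 1 0 = 0 := by
    rw [infty, act_mk_vec, Projectivization.mk_eq_mk_iff'] at hU
    obtain ⟨z, hz⟩ := hU
    simpa using (congrFun hz 1).symm
  have hdet : IsUnit (U.val 0 0 * U.val 1 1) := by
    simpa [Matrix.det_fin_two, h10] using (Matrix.isUnit_iff_isUnit_det _).1 U.isUnit
  rcases Int.isUnit_iff.1 (isUnit_of_mul_isUnit_left hdet) with h00 | h00 <;>
    rcases Int.isUnit_iff.1 (isUnit_of_mul_isUnit_right hdet) with h11 | h11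
  · exact ⟨U.val 0 1, Or.inl (by ext i j; fin_cases i <;> fin_cases j <;> simp [Fmat, *])⟩
  · exact ⟨-U.val 0 1, Or.inr (Or.inr (Or.inr (by
      ext i j; fin_cases i <;> fin_cases j <;> simp [Fmat, A1, *])))⟩
  · exact ⟨U.val 0 1, Or.inr (Or.inl (by
      ext i j; fin_cases i <;> fin_cases j <;> simp [Fmat, A1, *]))⟩
  · exact ⟨-U.val 0 1, Or.inr (Or.inr (Or.inl (by
      ext i j; fin_cases i <;> fin_cases j <;> simp [Fmat, *])))⟩

lemma conj_mem_GammaInf {U γ : GL2Z} (hU : act U infty = infty) (hγ : γ ∈ GammaInf) :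
    U * γ * U⁻¹ ∈ GammaInf := by
  have hA1 : A1 * γ * A1⁻¹ ∈ GammaInf :=
    mul_mem (mul_mem A1_mem_GammaInf hγ) (inv_mem A1_mem_GammaInf)
  obtain ⟨m, rfl | rfl | rfl | rfl⟩ := exists_eq_Fmat_of_act_infty_eq_infty hU
  · exact Fmat_conj_mem_GammaInf m hγ
  · simpa only [_root_.mul_inv_rev, mul_assoc] using Fmat_conj_mem_GammaInf m hA1
  · simpa only [inv_neg, neg_mul, mul_neg, neg_neg] using Fmat_conj_mem_GammaInf m hγ
  · simpa only [inv_neg, neg_mul, mul_neg, neg_neg, _root_.mul_inv_rev, mul_assoc]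
      using Fmat_conj_mem_GammaInf m hA1

lemma Gamma_eq_of_act_infty_eq {B B' : GL2Z} (h : act B infty = act B' infty) :
    Gamma B = Gamma B' := by
  suffices ∀ {B B' : GL2Z}, act B infty = act B' infty → Gamma B ≤ Gamma B' from
    le_antisymm (this h) (this h.symm)
  intro B B' h
  have hU : act (B'⁻¹ * B) infty = infty := by
    rw [act_mul, h, ← act_mul, inv_mul_cancel, act_one]
  rintro _ ⟨γ, hγ, rfl⟩
  refine ⟨_, conj_mem_GammaInf hU hγ, ?_⟩
  simp only [MulEquiv.coe_toMonoidHom, MulAut.conj_apply]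
  group

end GammaInf

section Towers

lemma towerBlock_succ (a : List ℤ) (ε : ℤ) (j : ℕ) :
    towerBlock a ε (j + 1) = towerBlock a.reverse ε j := by
  rcases Nat.mod_two_eq_zero_or_one j with h | h <;>
    simp [towerBlock, Nat.succ_mod_two_eq_zero_iff, h]

@[simp] lemma towerList_zero (a : List ℤ) (ε cs : ℕ → ℤ) : towerList a 0 ε cs = [] := rfl

lemma towerList_succ (a : List ℤ) (n : ℕ) (ε cs : ℕ → ℤ) :
    towerList a (n + 1) ε cs = towerBlock a (ε 0) 0 ++ (if 0 < n then [2 * cs 0] else []) ++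
      towerList a.reverse n (fun j => ε (j + 1)) (fun j => cs (j + 1)) := by
  rw [towerList, List.range_succ_eq_map, List.map_cons, List.flatten_cons, List.map_map,
    towerList]
  simp [Function.comp_def, towerBlock_succ]

def towerPair (a : List ℤ) (ε ε' c : ℤ) : List ℤ :=
  a.map (ε * ·) ++ 2 * c :: a.reverse.map (ε' * ·)

lemma towerPair_map_neg (a : List ℤ) (ε ε' c : ℤ) :
    (towerPair a ε ε' c).map Neg.neg = towerPair a (-ε) (-ε') (-c) := by
  simp [towerPair, Function.comp_def]

inductive IsTower (a : List ℤ) : List ℤ → Prop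
  | block {ε : ℤ} (hε : ε = 1 ∨ ε = -1) : IsTower a (a.map (ε * ·))
  | pair {ε ε' : ℤ} (hε : ε = 1 ∨ ε = -1) (hε' : ε' = 1 ∨ ε' = -1) (c : ℤ) :
      IsTower a (towerPair a ε ε' c)
  | cons {ε ε' : ℤ} (hε : ε = 1 ∨ ε = -1) (hε' : ε' = 1 ∨ ε' = -1) (c c' : ℤ) {L : List ℤ} :
      IsTower a L → IsTower a (towerPair a ε ε' c ++ 2 * c' :: L)

lemma isTower_towerList (a : List ℤ) {n : ℕ} (hn : 1 ≤ n) {ε : ℕ → ℤ}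
    (hε : ∀ j < n, ε j = 1 ∨ ε j = -1) (cs : ℕ → ℤ) : IsTower a (towerList a n ε cs) := by
  induction n using Nat.strong_induction_on generalizing ε cs with
  | _ n ih =>
    match n, hn with
    | 1, _ => simpa [towerList_succ, towerBlock] using IsTower.block (hε 0 (by omega))
    | 2, _ =>
      simpa [towerList_succ, towerBlock, towerPair] using
        IsTower.pair (hε 0 (by omega)) (hε 1 (by omega)) (cs 0)
    | k + 3, _ =>
      have hL := ih (k + 1) (by omega) (by omega) (ε := fun j => ε (j + 2))
        (fun j hj => hε (j + 2) (by omega)) (fun j => cs (j + 2))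
      simpa [towerList_succ, towerBlock, towerPair] using
        IsTower.cons (hε 0 (by omega)) (hε 1 (by omega)) (cs 0) (cs 1) hL

lemma IsTower.exists_towerList {a L : List ℤ} (h : IsTower a L) :
    ∃ n, 1 ≤ n ∧ ∃ ε : ℕ → ℤ, (∀ j < n, ε j = 1 ∨ ε j = -1) ∧ ∃ cs, towerList a n ε cs = L := by
  induction h with
  | block hε =>
    exact ⟨1, le_rfl, fun _ => _, fun _ _ => hε, 0, by simp [towerList_succ, towerBlock]⟩
  | @pair ε ε' hε hε' c =>
    refine ⟨2, by norm_num, fun | 0 => ε | _ + 1 => ε', fun j _ => ?_, fun _ => c, ?_⟩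
    · match j with
      | 0 => exact hε
      | _ + 1 => exact hε'
    · simp [towerList_succ, towerBlock, towerPair]
  | @cons ε ε' hε hε' c c' L _ ih =>
    obtain ⟨n, hn, ε₀, hε₀, cs₀, rfl⟩ := ih
    refine ⟨n + 2, by omega, fun | 0 => ε | 1 => ε' | j + 2 => ε₀ j, fun j hj => ?_,
      fun | 0 => c | 1 => c' | j + 2 => cs₀ j, ?_⟩
    · match j with
      | 0 => exact hε
      | 1 => exact hε'
      | j + 2 => exact hε₀ j (by omega)
    · have : 0 < n := hn
      simp [towerList_succ, towerBlock, towerPair, this]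

lemma IsTower.map_neg {a L : List ℤ} (h : IsTower a L) : IsTower a (L.map Neg.neg) := by
  induction h with
  | block hε =>
    simpa [Function.comp_def] using IsTower.block (a := a) (by omega : -_ = 1 ∨ -_ = -1)
  | pair hε hε' c => rw [towerPair_map_neg]; exact IsTower.pair (by omega) (by omega) (-c)
  | cons hε hε' c c' _ ih =>
    rw [List.map_append, List.map_cons, towerPair_map_neg, ← mul_neg]
    exact IsTower.cons (by omega) (by omega) (-c) (-c') ih

def IsTowerPt (a : List ℤ) (x : P1Q) : Prop :=
  x = infty ∨ ∃ c L, IsTower a L ∧ x = act (Fmat (2 * c)) (cfVal L)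

lemma isTowerPt_cfVal (a : List ℤ) : IsTowerPt a (cfVal a) :=
  Or.inr ⟨0, a, by simpa using IsTower.block (a := a) (ε := 1) (by norm_num),
    by simp [Fmat_zero, act_one]⟩

lemma IsTowerPt.act_Fmat {a : List ℤ} {x : P1Q} (h : IsTowerPt a x) (k : ℤ) :
    IsTowerPt a (act (Fmat (2 * k)) x) := by
  rcases h with rfl | ⟨c, L, hL, rfl⟩
  · exact Or.inl (act_Fmat_infty _)
  · exact Or.inr ⟨k + c, L, hL, by rw [← act_mul, ← Fmat_add, mul_add]⟩

lemma IsTowerPt.act_A1 {a : List ℤ} {x : P1Q} (h : IsTowerPt a x) : IsTowerPt a (act A1 x) := by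
  rcases h with rfl | ⟨c, L, hL, rfl⟩
  · exact Or.inl act_A1_infty
  · exact Or.inr ⟨-c, _, hL.map_neg, by rw [act_A1_act_Fmat, act_A1_cfVal, mul_neg]⟩

lemma IsTowerPt.act_cfProd_towerPair {a : List ℤ} {x : P1Q} (h : IsTowerPt a x) {ε ε' : ℤ}
    (hε : ε = 1 ∨ ε = -1) (hε' : ε' = 1 ∨ ε' = -1) (k : ℤ) :
    IsTowerPt a (act (cfProd (towerPair a ε ε' k)) (act Jmat x)) := by
  refine Or.inr ⟨0, ?_⟩
  simp only [mul_zero, Fmat_zero, act_one]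
  rcases h with rfl | ⟨c, L, hL, rfl⟩
  · refine ⟨_, IsTower.pair hε hε' k, ?_⟩
    rw [act_Jmat_infty, ← cfVal_nil, ← cfVal_append, List.append_nil]
  · exact ⟨_, IsTower.cons hε hε' k c hL, by rw [← cfVal_cons, ← cfVal_append]⟩

end Towers

section Orbits

lemma conj_Fmat_eq (a : List ℤ) (k : ℤ) :
    cfProd a * Jmat * Fmat (2 * k) * (cfProd a * Jmat)⁻¹ =
      cfProd (towerPair a 1 (-1) k) * Jmat := by
  simp only [cfProd_mul_Jmat_inv, towerPair, one_mul, List.map_id', neg_one_mul, cfProd_append,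
    cfProd_cons]
  group

lemma act_conj_Fmat_mul_A1 (a : List ℤ) (k : ℤ) (x : P1Q) :
    act (cfProd a * Jmat * (Fmat (2 * k) * A1) * (cfProd a * Jmat)⁻¹) x =
      act (cfProd (towerPair a 1 1 k)) (act Jmat (act A1 x)) := by
  simp only [cfProd_mul_Jmat_inv, towerPair, one_mul, List.map_id', cfProd_append, cfProd_cons,
    act_mul, act_A1_act_cfProd, act_A1_act_Jmat, List.map_map]
  simp

lemma GammaHat_le_stabilizer (a : List ℤ) :
    GammaHat (cfProd a * Jmat) ≤ MulAction.stabilizer GL2Z {x | IsTowerPt a x} := by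
  refine sup_le (le_stabilizer_of_forall_smul_mem ?_) (le_stabilizer_of_forall_smul_mem ?_)
  · rintro _ ⟨γ, hγ, rfl⟩ x (hx : IsTowerPt a x)
    obtain ⟨k, rfl | rfl⟩ := (mem_GammaInf_iff γ).1 hγ
    · show IsTowerPt a (act (cfProd a * Jmat * Fmat (2 * k) * (cfProd a * Jmat)⁻¹) x)
      rw [conj_Fmat_eq, act_mul]
      exact hx.act_cfProd_towerPair (by norm_num) (by norm_num) k
    · show IsTowerPt a (act (cfProd a * Jmat * (Fmat (2 * k) * A1) * (cfProd a * Jmat)⁻¹) x)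
      rw [act_conj_Fmat_mul_A1]
      exact hx.act_A1.act_cfProd_towerPair (by norm_num) (by norm_num) k
  · intro γ hγ x (hx : IsTowerPt a x)
    obtain ⟨k, rfl | rfl⟩ := (mem_GammaInf_iff γ).1 hγ
    · exact hx.act_Fmat k
    · show IsTowerPt a (act (Fmat (2 * k) * A1) x)
      rw [act_mul]
      exact hx.act_A1.act_Fmat k

lemma exists_mem_GammaHat_act_cfProd_towerPair (a : List ℤ) {ε ε' : ℤ} (hε : ε = 1 ∨ ε = -1)
    (hε' : ε' = 1 ∨ ε' = -1) (k : ℤ) : ∃ g ∈ GammaHat (cfProd a * Jmat),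
      ∀ y, act (cfProd (towerPair a ε ε' k)) (act Jmat y) = act g y := by
  have hconj : ∀ γ ∈ GammaInf,
      cfProd a * Jmat * γ * (cfProd a * Jmat)⁻¹ ∈ GammaHat (cfProd a * Jmat) :=
    fun γ hγ => Subgroup.mem_sup_left ⟨γ, hγ, rfl⟩
  have hA1 : A1 ∈ GammaHat (cfProd a * Jmat) := Subgroup.mem_sup_right A1_mem_GammaInf
  have hpos : ∀ {ε'} (_ : ε' = 1 ∨ ε' = -1) (k : ℤ), ∃ g ∈ GammaHat (cfProd a * Jmat),
      ∀ y, act (cfProd (towerPair a 1 ε' k)) (act Jmat y) = act g y := by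
    rintro ε' (rfl | rfl) k
    · refine ⟨_ * A1, mul_mem (hconj _ (mul_mem (Fmat_two_mul_mem_GammaInf k) A1_mem_GammaInf))
        hA1, fun y => ?_⟩
      rw [act_mul, act_conj_Fmat_mul_A1, act_A1_act_A1]
    · exact ⟨_, hconj _ (Fmat_two_mul_mem_GammaInf k), fun y => by rw [conj_Fmat_eq, act_mul]⟩
  rcases hε with rfl | rfl
  · exact hpos hε' k
  -- a leading block `-a` is the image under `A₁` of a leading block `a`
  obtain ⟨g, hg, hgy⟩ := hpos (ε' := -ε') (by omega) (-k)
  refine ⟨A1 * g * A1, mul_mem (mul_mem hA1 hg) hA1, fun y => ?_⟩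
  rw [← neg_neg ε', ← neg_neg k, ← towerPair_map_neg, ← act_A1_act_A1 (act Jmat y),
    ← act_A1_act_cfProd, act_A1_act_Jmat, hgy, act_mul, act_mul]

lemma IsTower.exists_mem_GammaHat {a L : List ℤ} (h : IsTower a L) :
    ∃ M ∈ GammaHat (cfProd a * Jmat), act M (cfVal a) = cfVal L ∨ act M infty = cfVal L := by
  induction h with
  | block hε =>
    rcases hε with rfl | rfl
    · exact ⟨1, one_mem _, Or.inl (by simp [act_one])⟩
    · exact ⟨A1, Subgroup.mem_sup_right A1_mem_GammaInf, Or.inl (by simp [act_A1_cfVal])⟩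
  | pair hε hε' c =>
    obtain ⟨g, hg, hgy⟩ := exists_mem_GammaHat_act_cfProd_towerPair a hε hε' c
    refine ⟨g, hg, Or.inr ?_⟩
    rw [← hgy, act_Jmat_infty, ← cfVal_nil, ← cfVal_append, List.append_nil]
  | cons hε hε' c c' _ ih =>
    obtain ⟨M, hM, hMx⟩ := ih
    obtain ⟨g, hg, hgy⟩ := exists_mem_GammaHat_act_cfProd_towerPair a hε hε' c
    refine ⟨g * Fmat (2 * c') * M,
      mul_mem (mul_mem hg (Subgroup.mem_sup_right (Fmat_two_mul_mem_GammaInf c'))) hM, ?_⟩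
    simp only [act_mul, cfVal_append, cfVal_cons, hgy]
    rcases hMx with hMx | hMx <;> simp only [hMx, true_or, or_true]

end Orbits

theorem mem_orbit_iff_continued_fraction_general (a : List ℤ) (r : ℚ) (hr : cfVal a = ratPt r) (r' : ℚ) :
    inOrbit r (ratPt r') ↔
      ∃ n : ℕ, 1 ≤ n ∧ ∃ c : ℤ, ∃ ε : ℕ → ℤ, (∀ j < n, ε j = 1 ∨ ε j = -1) ∧
        ∃ cs : ℕ → ℤ, act (Fmat (2 * c)) (cfVal (towerList a n ε cs)) = ratPt r' := by
  have hB₀ : act (cfProd a * Jmat) infty = ratPt r := by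
    rw [act_mul, act_Jmat_infty, ← cfVal_eq_act_cfProd, hr]
  constructor
  · rintro ⟨B, hB, M, hM, hx⟩
    rw [GammaHat, Gamma_eq_of_act_infty_eq (hB.trans hB₀.symm)] at hM
    have hT : IsTowerPt a (ratPt r') := by
      have hstab := MulAction.mem_stabilizer_set.1 (GammaHat_le_stabilizer a hM)
      rcases hx with hx | hx <;> rw [← hx]
      · exact (hstab _).2 (hr ▸ isTowerPt_cfVal a)
      · exact (hstab _).2 (Or.inl rfl)
    obtain ⟨c, L, hL, hx⟩ := hT.resolve_left (ratPt_ne_infty r')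
    obtain ⟨n, hn, ε, hε, cs, rfl⟩ := hL.exists_towerList
    exact ⟨n, hn, c, ε, hε, cs, hx.symm⟩
  · rintro ⟨n, hn, c, ε, hε, cs, hx⟩
    obtain ⟨M, hM, hMx⟩ := (isTower_towerList a hn hε cs).exists_mem_GammaHat
    refine ⟨_, hB₀, Fmat (2 * c) * M,
      mul_mem (Subgroup.mem_sup_right (Fmat_two_mul_mem_GammaInf c)) hM, ?_⟩
    rw [act_mul, act_mul, ← hr, ← hx]
    exact hMx.imp (congrArg _) (congrArg _)

/-- **Proposition 5.1.** For `r = [a₁, …, a_m] ∈ ℚ` with all `aᵢ` nonzero, a rational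
number `r̃` belongs to the `Γ̂_r`-orbit of `r` or of `∞` if and only if
`r̃ = 2c + [ε₁a, 2c₁, ε₂a⁻¹, 2c₂, ε₃a, …, 2c_{n−1}, εₙa^{(−1)^{n−1}}]` for some
`n ≥ 1`, `c ∈ ℤ`, signs `ε_j ∈ {±1}` and integers `c_j`. -/
theorem mem_orbit_iff_continued_fraction (a : List ℤ) (ha : a ≠ [])
    (ha0 : ∀ x ∈ a, x ≠ 0) (r : ℚ) (hr : cfVal a = ratPt r) (r' : ℚ) :
    inOrbit r (ratPt r') ↔
      ∃ n : ℕ, 1 ≤ n ∧ ∃ c : ℤ, ∃ ε : ℕ → ℤ, (∀ j < n, ε j = 1 ∨ ε j = -1) ∧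
        ∃ cs : ℕ → ℤ, act (Fmat (2 * c)) (cfVal (towerList a n ε cs)) = ratPt r' :=
  mem_orbit_iff_continued_fraction_general a r hr r'
end

section
/- There exist sequences (q_k)_{k≥1} and (p_k)_{k≥1} of integers with q_k and p_k coprime, p_k odd, 3 ≤ p_k, and p_k < p_{k+1} for all k, together with, for every k, a surjective group homomorphism φ_k : G(q_{k+1}/p_{k+1}) → G(q_k/p_k) satisfying φ_k(a) = a and φ_k(b) = b; that is, there is an infinite tower of epimorphisms between 2-bridge knot groups with strictly increasing denominators. [Infinite tower of epimorphisms among 2-bridge knot groups, constructed in the proof of Corollary 7.2] -/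
open Matrix

/-- The sign `ε_i = (−1)^⌊iq/p⌋`. -/
def bridgeEps (q p : ℤ) (i : ℕ) : ℤ :=
  if Even (((i : ℤ) * q).fdiv p) then 1 else -1

/-- The `i`-th letter `a^{ε_i}` (for `i` odd) resp. `b^{ε_i}` (for `i` even) of
the relator word; `a = FreeGroup.of true`, `b = FreeGroup.of false`. -/
def bridgeLetter (q p : ℤ) (i : ℕ) : FreeGroup Bool :=
  (if i % 2 = 1 then FreeGroup.of true else FreeGroup.of false) ^ (bridgeEps q p i)

/-- The word `w = a^{ε₁} b^{ε₂} a^{ε₃} ⋯` of length `p - 1`. -/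
def bridgeWord (q p : ℤ) : FreeGroup Bool :=
  ((List.range (p - 1).toNat).map fun j => bridgeLetter q p (j + 1)).prod

/-- The relator `w a w⁻¹ b⁻¹` (for `p` odd) resp. `w b w⁻¹ b⁻¹` (for `p` even). -/
def bridgeRelator (q p : ℤ) : FreeGroup Bool :=
  bridgeWord q p * (if Odd p then FreeGroup.of true else FreeGroup.of false) *
    (bridgeWord q p)⁻¹ * (FreeGroup.of false)⁻¹

/-- The `2`-bridge link group `G(q/p)`, presented by the generators `a`, `b`
(the upper meridian pair) and the single relator above. -/
abbrev BridgeGroup (q p : ℤ) : Type :=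
  PresentedGroup ({bridgeRelator q p} : Set (FreeGroup Bool))

/-- The upper meridian generator `a` of `G(q/p)`. -/
def genA (q p : ℤ) : BridgeGroup q p := PresentedGroup.of true

/-- The upper meridian generator `b` of `G(q/p)`. -/
def genB (q p : ℤ) : BridgeGroup q p := PresentedGroup.of false


/-! ### Auxiliary lemmas for the tower construction -/

private lemma bridgeEps_one_of_lt (p : ℤ) (i : ℕ) (h1 : 0 < i) (h2 : (i:ℤ) < p) :
    bridgeEps 1 p i = 1 := by
  unfold bridgeEps
  rw [mul_one, Int.fdiv_eq_ediv_of_nonneg _ (by linarith [Int.natCast_pos.mpr h1]),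
    Int.ediv_eq_zero_of_lt (by positivity) h2]
  simp

private lemma bridgeWordAux (p : ℤ) (hp : 0 < p) :
    ∀ n : ℕ, 2*n ≤ (p-1).toNat →
    ((List.range (2*n)).map fun j => bridgeLetter 1 p (j + 1)).prod
      = (FreeGroup.of true * FreeGroup.of false)^n := by
  intro n
  induction n with
  | zero => simp
  | succ n ih =>
    intro hle
    have hlt : ∀ j : ℕ, j < 2*(n+1) → ((j:ℤ)+1) < p := by
      intro j hj
      have hj1 : j + 1 ≤ (p-1).toNat := by omega
      have hc : ((j:ℤ)+1) ≤ ((p-1).toNat : ℤ) := by exact_mod_cast hj1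
      rw [Int.toNat_of_nonneg (by omega)] at hc
      omega
    have h2 : 2*(n+1) = (2*n) + 1 + 1 := by ring
    rw [h2, List.range_succ, List.range_succ]
    rw [List.map_append, List.map_append, List.prod_append, List.prod_append,
      List.map_singleton, List.map_singleton, List.prod_singleton, List.prod_singleton]
    rw [ih (by omega)]
    have c1 : (((2*n+1 : ℕ)) : ℤ) < p := by
      have := hlt (2*n) (by omega); push_cast at this ⊢; omega
    have c2 : (((2*n+2 : ℕ)) : ℤ) < p := by
      have := hlt (2*n+1) (by omega); push_cast at this ⊢; omega
    have l1 : bridgeLetter 1 p (2*n + 1) = FreeGroup.of true := by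
      unfold bridgeLetter
      rw [bridgeEps_one_of_lt p (2*n+1) (by omega) c1, if_pos (by omega), zpow_one]
    have l2 : bridgeLetter 1 p (2*n + 1 + 1) = FreeGroup.of false := by
      unfold bridgeLetter
      rw [show 2*n+1+1 = 2*n+2 from rfl,
        bridgeEps_one_of_lt p (2*n+2) (by omega) c2, if_neg (by omega), zpow_one]
    rw [l1, l2, pow_succ]
    group

private lemma bridgeWord_one (p : ℤ) (m : ℕ) (hp : 0 < p) (hm : (p-1).toNat = 2*m) :
    bridgeWord 1 p = (FreeGroup.of true * FreeGroup.of false)^m := by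
  unfold bridgeWord
  rw [hm]
  exact bridgeWordAux p hp m (le_of_eq hm.symm)

/-- The key group-theoretic computation: if `(AB)^m A (AB)^{-m} B^{-1} = 1` then
`(AB)^{3m+1} A (AB)^{-(3m+1)} B^{-1} = 1`. -/
private lemma tower_calc {G : Type*} [Group G] (A B : G) (m : ℕ)
    (h : (A*B)^m * A * ((A*B)^m)⁻¹ * B⁻¹ = 1) :
    (A*B)^(3*m+1) * A * ((A*B)^(3*m+1))⁻¹ * B⁻¹ = 1 := by
  set X := (A*B)^m with hX
  have h1 : X * A = B * X := by
    have h' : X * A * X⁻¹ = B := mul_inv_eq_one.mp h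
    rw [← h']
    group
  -- semiconjugation identities
  have sAB : A * (B*A) = (A*B) * A := by group
  have sBA : B * (A*B) = (B*A) * B := by group
  have sA : ∀ n : ℕ, A * (B*A)^n = (A*B)^n * A := fun n => (SemiconjBy.pow_right sAB n)
  have sB : ∀ n : ℕ, B * (A*B)^n = (B*A)^n * B := fun n => (SemiconjBy.pow_right sBA n)
  have hZ : (A*B)^(2*m+1) = (X*A)*(X*A) := by
    calc (A*B)^(2*m+1) = X * ((A*B) * X) := by
          rw [hX, ← pow_succ', ← pow_add]; ring_nf
    _ = X * (A * (B * X)) := by group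
    _ = X * (A * (X * A)) := by
          rw [← h1]
    _ = (X*A)*(X*A) := by group
  have hZ' : (B*A)^(2*m+1) = (X*A)*(X*A) := by
    calc (B*A)^(2*m+1) = B * (A*B)^(2*m) * A := by
          rw [pow_succ, ← mul_assoc, ← sB (2*m)]
    _ = B * (X * X) * A := by rw [hX, ← pow_add]; ring_nf
    _ = (B * X) * (X * A) := by group
    _ = (X*A)*(X*A) := by rw [← h1]
  have hcomm : B * (A*B)^(2*m+1) = (A*B)^(2*m+1) * B := by
    rw [sB (2*m+1), hZ', ← hZ]
  -- final computation
  have hsplit : (A*B)^(3*m+1) = (A*B)^(2*m+1) * X := by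
    rw [hX, ← pow_add]; ring_nf
  have hXA : X * A * X⁻¹ = B := by
    rw [h1]; group
  set Z := (A*B)^(2*m+1) with hZdef
  calc (A*B)^(3*m+1) * A * ((A*B)^(3*m+1))⁻¹ * B⁻¹
      = Z * (X * A * X⁻¹) * Z⁻¹ * B⁻¹ := by rw [hsplit]; group
    _ = Z * B * Z⁻¹ * B⁻¹ := by rw [hXA]
    _ = (B * Z) * Z⁻¹ * B⁻¹ := by rw [hcomm]
    _ = 1 := by group

/-- **Infinite tower of epimorphisms (proof of Corollary 7.2).** There are sequences
`(q_k)`, `(p_k)` with `q_k, p_k` coprime, `p_k` odd, `3 ≤ p_k`, `p_k < p_{k+1}`,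
together with epimorphisms `G(q_{k+1}/p_{k+1}) → G(q_k/p_k)` sending the upper
meridian pair to the upper meridian pair. -/

theorem exists_infinite_tower_of_bridge_epimorphisms :
    ∃ q p : ℕ → ℤ,
      (∀ k, Int.gcd (q k) (p k) = 1) ∧ (∀ k, Odd (p k)) ∧ (∀ k, 3 ≤ p k) ∧
      (∀ k, p k < p (k + 1)) ∧
      ∀ k, ∃ φ : BridgeGroup (q (k + 1)) (p (k + 1)) →* BridgeGroup (q k) (p k),
        Function.Surjective φ ∧
        φ (genA (q (k + 1)) (p (k + 1))) = genA (q k) (p k) ∧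
        φ (genB (q (k + 1)) (p (k + 1))) = genB (q k) (p k) := by
  classical
  refine ⟨fun _ => 1, fun k => (3:ℤ)^(k+1), fun k => by simp,
    fun k => Odd.pow (by decide), fun k => ?_, fun k => ?_, fun k => ?_⟩
  · have h : (3:ℤ)^1 ≤ 3^(k+1) := pow_le_pow_right₀ (by norm_num) (by omega)
    simpa using h
  · have h0 : (0:ℤ) < 3^(k+1) := by positivity
    calc (3:ℤ)^(k+1) < 3 * 3^(k+1) := by linarith
    _ = 3^(k+1+1) := by ring
  · -- the epimorphism
    beta_reduce
    set p : ℤ := (3:ℤ)^(k+1) with hpdef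
    set pt : ℤ := (3:ℤ)^(k+1+1) with hptdef
    have hp3 : pt = 3 * p := by rw [hpdef, hptdef]; ring
    have hppos : 0 < p := by positivity
    have hptpos : 0 < pt := by positivity
    have hpodd : Odd p := Odd.pow (by decide)
    have hptodd : Odd pt := Odd.pow (by decide)
    obtain ⟨m, hm⟩ : ∃ m : ℕ, (p - 1).toNat = 2 * m := by
      obtain ⟨c, hc⟩ := hpodd
      have hc0 : 0 ≤ c := by omega
      exact ⟨c.toNat, by omega⟩
    have hmt : (pt - 1).toNat = 2 * (3*m+1) := by omega
    have hw : bridgeWord 1 p = (FreeGroup.of true * FreeGroup.of false)^m :=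
      bridgeWord_one p m hppos hm
    have hwt : bridgeWord 1 pt = (FreeGroup.of true * FreeGroup.of false)^(3*m+1) :=
      bridgeWord_one pt (3*m+1) hptpos hmt
    set rels : Set (FreeGroup Bool) := {bridgeRelator 1 p} with hrels
    set relst : Set (FreeGroup Bool) := {bridgeRelator 1 pt} with hrelst
    set mk : FreeGroup Bool →* PresentedGroup rels := PresentedGroup.mk rels with hmkdef
    have hrel : mk (bridgeRelator 1 p) = 1 := by
      refine (QuotientGroup.eq_one_iff _).mpr ?_
      exact Subgroup.subset_normalClosure rfl
    have erel : bridgeRelator 1 p = (FreeGroup.of true * FreeGroup.of false)^m *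
        FreeGroup.of true * ((FreeGroup.of true * FreeGroup.of false)^m)⁻¹ *
        (FreeGroup.of false)⁻¹ := by
      unfold bridgeRelator
      rw [if_pos hpodd, hw]
    have hrel' : (mk (FreeGroup.of true) * mk (FreeGroup.of false))^m * mk (FreeGroup.of true) *
        ((mk (FreeGroup.of true) * mk (FreeGroup.of false))^m)⁻¹ *
        (mk (FreeGroup.of false))⁻¹ = 1 := by
      have h0 := hrel
      rw [erel] at h0
      simpa only [_root_.map_mul, _root_.map_pow, _root_.map_inv] using h0
    have goal' := tower_calc (mk (FreeGroup.of true)) (mk (FreeGroup.of false)) m hrel'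
    have key : ∀ r ∈ relst,
        FreeGroup.lift (fun x => (PresentedGroup.of x : PresentedGroup rels)) r = 1 := by
      intro r hr
      rw [hrelst, Set.mem_singleton_iff] at hr
      subst hr
      have hlift : FreeGroup.lift (fun x => (PresentedGroup.of x : PresentedGroup rels))
          = mk := by
        apply FreeGroup.ext_hom
        intro x
        rfl
      rw [hlift]
      have erelt : bridgeRelator 1 pt = (FreeGroup.of true * FreeGroup.of false)^(3*m+1) *
          FreeGroup.of true * ((FreeGroup.of true * FreeGroup.of false)^(3*m+1))⁻¹ *
          (FreeGroup.of false)⁻¹ := by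
        unfold bridgeRelator
        rw [if_pos hptodd, hwt]
      rw [erelt]
      simpa only [_root_.map_mul, _root_.map_pow, _root_.map_inv] using goal' 
    refine ⟨PresentedGroup.toGroup key, ?_, ?_, ?_⟩
    · -- surjectivity
      intro g
      refine PresentedGroup.induction_on (rels := rels)
        (C := fun x => ∃ a, (PresentedGroup.toGroup key) a = x) g
        fun z => ⟨PresentedGroup.mk relst z, ?_⟩
      have hcomp : (PresentedGroup.toGroup key).comp (PresentedGroup.mk relst) = mk := by
        apply FreeGroup.ext_hom
        intro x
        exact PresentedGroup.toGroup.of key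
      exact DFunLike.congr_fun hcomp z
    · exact PresentedGroup.toGroup.of key
    · exact PresentedGroup.toGroup.of key
end
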